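/- arXiv:math/0510557 — 2 statements merged into one kernel-verified Lean document; each statement's English description precedes it below -/
import Mathlib

section
/- (Gradient estimate for a convex function squeezed between affine and quadratic bounds, used in the proof of Theorem 4.) Let F : ℝ^m → ℝ be convex and continuously differentiable, and suppose there exist constants α > 0, β ≥ 0, γ ≥ 0 such that −β ≤ F(v) ≤ (α/2)|v|^2 + γ for all v ∈ ℝ^m. Then for every v ∈ ℝ^m, (1/(2α)) |∇F(v)|^2 ≤ ⟨∇F(v), v⟩ + β + γ. -/
/-!
The tangent plane of the convex function `F` at `v` lies below its graph, so testing it at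
`w = ∇F(v) / α` gives `F v + |∇F(v)|² / α - ⟨∇F(v), v⟩ ≤ F w`. The lower bound controls `F v`
and the quadratic upper bound gives `F w ≤ |∇F(v)|² / (2α) + γ`, which rearranges to the claim.
-/

open scoped RealInnerProductSpace

theorem ConvexOn.add_le_of_hasFDerivAt {E : Type*} [NormedAddCommGroup E] [NormedSpace ℝ E]
    {F : E → ℝ} {L : E →L[ℝ] ℝ} {v : E} (hconv : ConvexOn ℝ Set.univ F)
    (hF : HasFDerivAt F L v) (w : E) :
    F v + L (w - v) ≤ F w := by
  have hline : HasDerivAt (F ∘ AffineMap.lineMap (k := ℝ) v w) (L (w - v)) 0 := by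
    have hF₀ : HasFDerivAt F L (AffineMap.lineMap v w (0 : ℝ)) := by simpa using hF
    exact hF₀.comp_hasDerivAt 0 AffineMap.hasDerivAt_lineMap
  have hconv_line : ConvexOn ℝ Set.univ (F ∘ AffineMap.lineMap (k := ℝ) v w) :=
    hconv.comp_affineMap (AffineMap.lineMap v w)
  have hslope :=
    hconv_line.le_slope_of_hasDerivAt (Set.mem_univ 0) (Set.mem_univ 1) one_pos hline
  simp only [slope_def_field, Function.comp_apply, AffineMap.lineMap_apply_one,
    AffineMap.lineMap_apply_zero, sub_zero, div_one] at hslope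
  linarith

theorem ContinuousLinearMap.apply_eq_sum_mul_single {ι : Type*} [Fintype ι] [DecidableEq ι]
    (L : (ι → ℝ) →L[ℝ] ℝ) (u : ι → ℝ) : L u = ∑ i, L (Pi.single i 1) * u i := by
  conv_lhs => rw [pi_eq_sum_univ' u, map_sum]
  simp [mul_comm]

theorem norm_sq_div_le_inner_add_of_subgradient {E : Type*} [NormedAddCommGroup E]
    [InnerProductSpace ℝ E] {F : E → ℝ} {g v : E} {α β γ : ℝ} (hα : 0 < α)
    (hsub : ∀ w, F v + ⟪g, w - v⟫ ≤ F w) (hlow : -β ≤ F v)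
    (hhigh : ∀ w, F w ≤ α / 2 * ‖w‖ ^ 2 + γ) :
    ‖g‖ ^ 2 / (2 * α) ≤ ⟪g, v⟫ + β + γ := by
  have hsub_g := hsub (α⁻¹ • g)
  have hhigh_g := hhigh (α⁻¹ • g)
  rw [inner_sub_right, inner_smul_right, real_inner_self_eq_norm_sq] at hsub_g
  rw [norm_smul, mul_pow, Real.norm_of_nonneg (inv_nonneg.2 hα.le)] at hhigh_g
  have hquad : α / 2 * (α⁻¹ ^ 2 * ‖g‖ ^ 2) = ‖g‖ ^ 2 / (2 * α) := by field_simp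
  have hlin : α⁻¹ * ‖g‖ ^ 2 = 2 * (‖g‖ ^ 2 / (2 * α)) := by field_simp
  linarith

theorem convex_gradient_estimate_general
    (m : ℕ)
    (F : (Fin m → ℝ) → ℝ)
    (hconv : ConvexOn ℝ Set.univ F)
    (hF : ContDiff ℝ 1 F)
    (α β γ : ℝ) (hα : 0 < α)
    (hlow : ∀ v : Fin m → ℝ, -β ≤ F v)
    (hhigh : ∀ v : Fin m → ℝ, F v ≤ α / 2 * (∑ i, (v i) ^ 2) + γ)
    (v : Fin m → ℝ) :
    1 / (2 * α) * ∑ i, (fderiv ℝ F v (Pi.single i 1)) ^ 2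
      ≤ (∑ i, fderiv ℝ F v (Pi.single i 1) * v i) + β + γ := by
  set L := fderiv ℝ F v
  let g : EuclideanSpace ℝ (Fin m) := WithLp.toLp 2 fun i => L (Pi.single i 1)
  have hinner (w : EuclideanSpace ℝ (Fin m)) : ⟪g, w⟫ = L w.ofLp := by
    simp [g, PiLp.inner_apply, L.apply_eq_sum_mul_single w.ofLp, mul_comm]
  have hsub (w : EuclideanSpace ℝ (Fin m)) : F v + ⟪g, w - WithLp.toLp 2 v⟫ ≤ F w := by
    simpa [hinner] using
      hconv.add_le_of_hasFDerivAt (hF.differentiable one_ne_zero v).hasFDerivAt w.ofLp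
  have hhigh_euclidean (w : EuclideanSpace ℝ (Fin m)) : F w ≤ α / 2 * ‖w‖ ^ 2 + γ := by
    simpa [EuclideanSpace.real_norm_sq_eq] using hhigh w.ofLp
  have key := norm_sq_div_le_inner_add_of_subgradient (F := F ∘ WithLp.ofLp) hα hsub
    (hlow v) hhigh_euclidean
  rw [EuclideanSpace.real_norm_sq_eq, hinner, L.apply_eq_sum_mul_single] at key
  rw [one_div_mul_eq_div]
  exact key

/-- gradient estimate for a convex `C¹` function squeezed between an
affine lower bound and a quadratic upper bound:
`(1/(2α)) |∇F(v)|² ≤ ⟨∇F(v), v⟩ + β + γ`. -/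
theorem convex_gradient_estimate
    (m : ℕ) (hm : 0 < m)
    (F : (Fin m → ℝ) → ℝ)
    (hconv : ConvexOn ℝ Set.univ F)
    (hF : ContDiff ℝ 1 F)
    (α β γ : ℝ) (hα : 0 < α) (hβ : 0 ≤ β) (hγ : 0 ≤ γ)
    (hlow : ∀ v : Fin m → ℝ, -β ≤ F v)
    (hhigh : ∀ v : Fin m → ℝ, F v ≤ α / 2 * (∑ i, (v i) ^ 2) + γ)
    (v : Fin m → ℝ) :
    1 / (2 * α) * ∑ i, (fderiv ℝ F v (Pi.single i 1)) ^ 2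
      ≤ (∑ i, fderiv ℝ F v (Pi.single i 1) * v i) + β + γ :=
  convex_gradient_estimate_general m F hconv hF α β γ hα hlow hhigh v
end

section
/- (Integrated intermediate inequality in the proof of Theorem 4.) Let H : ℝ^p × ℝ^{n+np} → ℝ be measurable in t for each u and continuously differentiable and convex in u for each t ∈ T_0, and suppose there are constants α > 0, β ≥ 0, γ ≥ 0 with −β ≤ H(t,u) ≤ (α/2)|u|^2 + γ for all t ∈ T_0, u ∈ ℝ^{n+np}. Then every continuously differentiable, multiple periodic (with period T) solution u = (x,q) of (δ⊗J) ∂u/∂t + ∇_u H(t, u(t)) = 0 satisfies (1/(2α)) ∫_{T_0} |(δ⊗J) ∂u/∂t|^2 dt + ∫_{T_0} ⟨(δ⊗J) ∂u/∂t, u(t)⟩ dt ≤ (β+γ) T^1⋯T^p. -/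
/-!
Pointwise this is a Fenchel–Young argument. With `v = (δ⊗J) ∂u/∂t` the Hamilton equations say
`∇_u H(t, u(t)) = -v`, so convexity gives `H(t, w) - H(t, u) ≥ ⟨-v, w - u⟩` for every `w`.
Choosing `w = -v/α` and using `H(t, w) ≤ |v|²/(2α) + γ`, `H(t, u) ≥ -β` yields
`|v|²/(2α) + ⟨v, u⟩ ≤ β + γ` at every `t ∈ T₀`; integrate over `T₀`, of volume `T¹⋯Tᵖ`.
-/

open MeasureTheory Real

/-- The period parallelepiped `T₀ = [0,T¹] × ⋯ × [0,Tᵖ] ⊆ ℝᵖ`. -/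
def periodBox {p : ℕ} (T : Fin p → ℝ) : Set (Fin p → ℝ) :=
  Set.univ.pi fun i => Set.Icc 0 (T i)

/-- `u` is multiple periodic with period `T`. -/
def MultiPeriodic {p : ℕ} {E : Type*} (T : Fin p → ℝ) (u : (Fin p → ℝ) → E) : Prop :=
  ∀ (k : Fin p → ℤ) (t : Fin p → ℝ), u (fun i => t i + (k i : ℝ) * T i) = u t

/-- `max_i T^i`. -/
noncomputable def maxPeriod {p : ℕ} (hp : 0 < p) (T : Fin p → ℝ) : ℝ :=
  Finset.univ.sup' ⟨⟨0, hp⟩, Finset.mem_univ _⟩ T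

/-- The Euclidean norm of `w = (x,q) ∈ ℝ^{n+np}`. -/
noncomputable def euclNorm {p n : ℕ} (w : (Fin n → ℝ) × (Fin n → Fin p → ℝ)) : ℝ :=
  Real.sqrt ((∑ i, (w.1 i) ^ 2) + ∑ i, ∑ α, (w.2 i α) ^ 2)

/-- `u = (x,q)` solves the multi-time Hamilton system
`(δ⊗J) ∂u/∂t + ∇_u H(t,u(t)) = 0` at every `t` of the period box, i.e.
`Σ_α ∂q_i^α/∂t^α = −∂H/∂x^i` and `∂x^i/∂t^β = ∂H/∂q_i^β`. -/
def IsHamiltonSolution {p n : ℕ} (T : Fin p → ℝ)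
    (H : (Fin p → ℝ) → (Fin n → ℝ) × (Fin n → Fin p → ℝ) → ℝ)
    (x : (Fin p → ℝ) → (Fin n → ℝ)) (q : (Fin p → ℝ) → (Fin n → Fin p → ℝ)) : Prop :=
  ∀ t ∈ periodBox T,
    (∀ i, (∑ α, fderiv ℝ q t (Pi.single α 1) i α)
        = - fderiv ℝ (H t) (x t, q t) ((Pi.single i 1 : Fin n → ℝ), 0)) ∧
    (∀ i β, fderiv ℝ x t (Pi.single β 1) i
        = fderiv ℝ (H t) (x t, q t) ((0 : Fin n → ℝ), Pi.single i (Pi.single β 1)))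

open Set

section Convex

variable {E : Type*} [NormedAddCommGroup E] [NormedSpace ℝ E] {f : E → ℝ} {f' : E →L[ℝ] ℝ}
  {s : Set E} {u w : E}

theorem ConvexOn.le_sub_of_hasFDerivAt (hf : ConvexOn ℝ s f) (hu : u ∈ s) (hw : w ∈ s)
    (hf' : HasFDerivAt f f' u) : f' (w - u) ≤ f w - f u := by
  have hline : HasDerivAt (fun r : ℝ => f (AffineMap.lineMap u w r)) (f' (w - u)) 0 :=
    HasFDerivAt.comp_hasDerivAt (0 : ℝ) (by simpa using hf') AffineMap.hasDerivAt_lineMap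
  simpa [slope_def_field] using
    (hf.comp_affineMap (AffineMap.lineMap u w)).le_slope_of_hasDerivAt
      (x := 0) (y := 1) (by simpa using hu) (by simpa using hw) one_pos hline

theorem ConvexOn.inv_two_mul_bilin_self_add_bilin_le (B : LinearMap.BilinForm ℝ E) {v : E}
    {α β γ : ℝ} (hα : 0 < α) (hf : ConvexOn ℝ univ f) (hf' : HasFDerivAt f f' u)
    (hgrad : ∀ z, f' z = -B v z) (hlow : -β ≤ f u) (hhigh : ∀ w, f w ≤ α / 2 * B w w + γ) :
    (2 * α)⁻¹ * B v v + B v u ≤ β + γ := by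
  have htangent := hf.le_sub_of_hasFDerivAt (mem_univ u) (mem_univ (-α⁻¹ • v)) hf'
  have hquad := hhigh (-α⁻¹ • v)
  simp only [hgrad, map_sub, map_smul, LinearMap.smul_apply, smul_eq_mul] at htangent hquad
  have hquad_eq : α / 2 * (-α⁻¹ * (-α⁻¹ * B v v)) = (2 * α)⁻¹ * B v v := by field_simp
  have htangent_eq : -(-α⁻¹ * B v v - B v u) = 2 * ((2 * α)⁻¹ * B v v) + B v u := by
    field_simp; ring
  linarith

end Convex

abbrev PhaseSpace (p n : ℕ) := (Fin n → ℝ) × (Fin n → Fin p → ℝ)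

section PhaseSpace

variable {p n : ℕ}

def phasePairing : LinearMap.BilinForm ℝ (PhaseSpace p n) :=
  LinearMap.mk₂ ℝ (fun v w => ∑ i, v.1 i * w.1 i + ∑ i, ∑ b, v.2 i b * w.2 i b)
    (fun _ _ _ => by simp only [Prod.fst_add, Prod.snd_add, Pi.add_apply, add_mul,
      Finset.sum_add_distrib]; ring)
    (fun _ _ _ => by simp only [Prod.smul_fst, Prod.smul_snd, Pi.smul_apply, smul_eq_mul,
      mul_assoc, Finset.mul_sum, mul_add])
    (fun _ _ _ => by simp only [Prod.fst_add, Prod.snd_add, Pi.add_apply, mul_add,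
      Finset.sum_add_distrib]; ring)
    (fun _ _ _ => by simp only [Prod.smul_fst, Prod.smul_snd, Pi.smul_apply, smul_eq_mul,
      mul_left_comm _ (_ : ℝ), Finset.mul_sum, mul_add])

theorem phasePairing_apply (v w : PhaseSpace p n) :
    phasePairing v w = ∑ i, v.1 i * w.1 i + ∑ i, ∑ b, v.2 i b * w.2 i b := rfl

theorem euclNorm_sq_eq_phasePairing (w : PhaseSpace p n) :
    euclNorm w ^ 2 = phasePairing w w := by
  rw [euclNorm, sq_sqrt (by positivity), phasePairing_apply]
  simp only [sq]

theorem Continuous.phasePairing {X : Type*} [TopologicalSpace X] {v w : X → PhaseSpace p n}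
    (hv : Continuous v) (hw : Continuous w) : Continuous fun t => phasePairing (v t) (w t) := by
  simp only [phasePairing_apply]
  fun_prop

theorem PhaseSpace.linearMap_apply_eq_sum (D : PhaseSpace p n →ₗ[ℝ] ℝ) (z : PhaseSpace p n) :
    D z = ∑ i, z.1 i * D (Pi.single i 1, 0)
      + ∑ i, ∑ b, z.2 i b * D (0, Pi.single i (Pi.single b 1)) := by
  have hz : z = ∑ i, z.1 i • ((Pi.single i 1 : Fin n → ℝ), (0 : Fin n → Fin p → ℝ))
      + ∑ i, ∑ b, z.2 i b •
          ((0 : Fin n → ℝ), (Pi.single i (Pi.single b 1) : Fin n → Fin p → ℝ)) := by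
    ext i <;> simp [Prod.fst_sum, Prod.snd_sum, Finset.sum_apply, Pi.single_apply]
  conv_lhs => rw [hz]
  simp only [map_add, map_sum, map_smul, smul_eq_mul]

theorem PhaseSpace.linearMap_eq_neg_phasePairing (D : PhaseSpace p n →ₗ[ℝ] ℝ)
    (v : PhaseSpace p n)
    (h₁ : ∀ i, D (Pi.single i 1, 0) = -v.1 i)
    (h₂ : ∀ i b, D (0, Pi.single i (Pi.single b 1)) = -v.2 i b) (z : PhaseSpace p n) :
    D z = -phasePairing v z := by
  simp only [PhaseSpace.linearMap_apply_eq_sum D z, h₁, h₂, phasePairing_apply, neg_add,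
    mul_comm (z.1 _), mul_comm (z.2 _ _), neg_mul, Finset.sum_neg_distrib]

end PhaseSpace

section Hamilton

variable {p n : ℕ} {T : Fin p → ℝ} {H : (Fin p → ℝ) → PhaseSpace p n → ℝ}
  {x : (Fin p → ℝ) → (Fin n → ℝ)} {q : (Fin p → ℝ) → (Fin n → Fin p → ℝ)}

/-- `(δ⊗J) ∂u/∂t` for `u = (x, q)`. -/
noncomputable def polysymplecticDeriv (x : (Fin p → ℝ) → (Fin n → ℝ))
    (q : (Fin p → ℝ) → (Fin n → Fin p → ℝ)) (t : Fin p → ℝ) : PhaseSpace p n :=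
  (fun i => ∑ a, fderiv ℝ q t (Pi.single a 1) i a, fun i b => -fderiv ℝ x t (Pi.single b 1) i)

theorem phasePairing_polysymplecticDeriv_self (t : Fin p → ℝ) :
    phasePairing (polysymplecticDeriv x q t) (polysymplecticDeriv x q t)
      = (∑ i, (∑ a, fderiv ℝ q t (Pi.single a 1) i a) ^ 2)
        + ∑ i, ∑ b, (fderiv ℝ x t (Pi.single b 1) i) ^ 2 := by
  simp only [phasePairing_apply, polysymplecticDeriv, neg_mul_neg, sq]

theorem phasePairing_polysymplecticDeriv (t : Fin p → ℝ) :
    phasePairing (polysymplecticDeriv x q t) (x t, q t)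
      = (∑ i, (∑ a, fderiv ℝ q t (Pi.single a 1) i a) * x t i)
        - ∑ i, ∑ b, (fderiv ℝ x t (Pi.single b 1) i) * q t i b := by
  simp only [phasePairing_apply, polysymplecticDeriv, neg_mul, Finset.sum_neg_distrib,
    sub_eq_add_neg]

theorem continuous_polysymplecticDeriv (hx : ContDiff ℝ 1 x) (hq : ContDiff ℝ 1 q) :
    Continuous (polysymplecticDeriv x q) := by
  have hdx := hx.continuous_fderiv one_ne_zero
  have hdq := hq.continuous_fderiv one_ne_zero
  unfold polysymplecticDeriv
  fun_prop

theorem IsHamiltonSolution.fderiv_apply_eq_neg_phasePairing (hsol : IsHamiltonSolution T H x q)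
    {t : Fin p → ℝ} (ht : t ∈ periodBox T) (z : PhaseSpace p n) :
    fderiv ℝ (H t) (x t, q t) z = -phasePairing (polysymplecticDeriv x q t) z := by
  refine PhaseSpace.linearMap_eq_neg_phasePairing (fderiv ℝ (H t) (x t, q t)).toLinearMap _
    (fun i => ?_) (fun i b => ?_) z
  · simp [polysymplecticDeriv, (hsol t ht).1 i]
  · simp [polysymplecticDeriv, (hsol t ht).2 i b]

end Hamilton

theorem volume_real_periodBox {p : ℕ} {T : Fin p → ℝ} (hT : ∀ i, 0 ≤ T i) :
    volume.real (periodBox T) = ∏ i, T i := by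
  rw [periodBox, Set.pi_univ_Icc, measureReal_def, Real.volume_Icc_pi_toReal (fun i => hT i)]
  simp

theorem Continuous.integrableOn_periodBox {p : ℕ} {T : Fin p → ℝ} {f : (Fin p → ℝ) → ℝ}
    (hf : Continuous f) : IntegrableOn f (periodBox T) :=
  hf.continuousOn.integrableOn_compact (isCompact_univ_pi fun _ => isCompact_Icc)

theorem setIntegral_periodBox_le_of_le {p : ℕ} {T : Fin p → ℝ} (hT : ∀ i, 0 ≤ T i)
    {f : (Fin p → ℝ) → ℝ} (hf : Continuous f) {c : ℝ} (hle : ∀ t ∈ periodBox T, f t ≤ c) :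
    ∫ t in periodBox T, f t ≤ c * ∏ i, T i := by
  calc ∫ t in periodBox T, f t ≤ ∫ _ in periodBox T, c :=
        setIntegral_mono_on hf.integrableOn_periodBox continuous_const.integrableOn_periodBox
          (MeasurableSet.univ_pi fun _ => measurableSet_Icc) hle
    _ = c * ∏ i, T i := by
      rw [setIntegral_const, volume_real_periodBox hT, smul_eq_mul, mul_comm]

theorem hamilton_intermediate_inequality_general
    (p n : ℕ)
    (T : Fin p → ℝ) (hT : ∀ i, 0 < T i)
    (H : (Fin p → ℝ) → (Fin n → ℝ) × (Fin n → Fin p → ℝ) → ℝ)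
    (hC1 : ∀ t ∈ periodBox T, ContDiff ℝ 1 (H t))
    (hconv : ∀ t ∈ periodBox T, ConvexOn ℝ Set.univ (H t))
    (α β γ : ℝ)
    (hα : 0 < α)
    (hlow : ∀ t ∈ periodBox T, ∀ w : (Fin n → ℝ) × (Fin n → Fin p → ℝ), -β ≤ H t w)
    (hhigh : ∀ t ∈ periodBox T, ∀ w : (Fin n → ℝ) × (Fin n → Fin p → ℝ),
      H t w ≤ α / 2 * (euclNorm w) ^ 2 + γ)
    (x : (Fin p → ℝ) → (Fin n → ℝ)) (q : (Fin p → ℝ) → (Fin n → Fin p → ℝ))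
    (hx : ContDiff ℝ 1 x) (hq : ContDiff ℝ 1 q)
    (hsol : IsHamiltonSolution T H x q) :
    1 / (2 * α) *
        (∫ t in periodBox T,
          ((∑ i, (∑ a, fderiv ℝ q t (Pi.single a 1) i a) ^ 2)
            + ∑ i, ∑ b, (fderiv ℝ x t (Pi.single b 1) i) ^ 2))
      + (∫ t in periodBox T,
          ((∑ i, (∑ a, fderiv ℝ q t (Pi.single a 1) i a) * x t i)
            - ∑ i, ∑ b, (fderiv ℝ x t (Pi.single b 1) i) * q t i b))
      ≤ (β + γ) * ∏ i, T i := by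
  set v := polysymplecticDeriv x q
  have hv : Continuous v := continuous_polysymplecticDeriv hx hq
  have hu : Continuous fun t => (x t, q t) := hx.continuous.prodMk hq.continuous
  have hpointwise : ∀ t ∈ periodBox T,
      (2 * α)⁻¹ * phasePairing (v t) (v t) + phasePairing (v t) (x t, q t) ≤ β + γ :=
    fun t ht => (hconv t ht).inv_two_mul_bilin_self_add_bilin_le phasePairing hα
      ((hC1 t ht).differentiable one_ne_zero _).hasFDerivAt
      (hsol.fderiv_apply_eq_neg_phasePairing ht) (hlow t ht _)
      (fun w => euclNorm_sq_eq_phasePairing w ▸ hhigh t ht w)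
  simp_rw [← phasePairing_polysymplecticDeriv_self, ← phasePairing_polysymplecticDeriv, one_div]
  rw [← integral_const_mul, ← integral_add
    ((hv.phasePairing hv).const_mul _).integrableOn_periodBox
    (hv.phasePairing hu).integrableOn_periodBox]
  exact setIntegral_periodBox_le_of_le (fun i => (hT i).le)
    (((hv.phasePairing hv).const_mul _).add (hv.phasePairing hu)) hpointwise

/-- integrated intermediate inequality in the proof of Theorem 4:
for a Hamiltonian with `−β ≤ H(t,u) ≤ (α/2)|u|² + γ`, every `C¹` multiply periodic
solution satisfies
`(1/(2α)) ∫ |(δ⊗J)∂u/∂t|² + ∫ ⟨(δ⊗J)∂u/∂t, u⟩ ≤ (β+γ) T¹⋯Tᵖ`. -/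
theorem hamilton_intermediate_inequality
    (p n : ℕ) (hp : 0 < p) (hn : 0 < n)
    (T : Fin p → ℝ) (hT : ∀ i, 0 < T i)
    (H : (Fin p → ℝ) → (Fin n → ℝ) × (Fin n → Fin p → ℝ) → ℝ)
    (hmeas : ∀ w, Measurable fun t => H t w)
    (hC1 : ∀ t ∈ periodBox T, ContDiff ℝ 1 (H t))
    (hconv : ∀ t ∈ periodBox T, ConvexOn ℝ Set.univ (H t))
    (α β γ : ℝ)
    (hα : 0 < α) (hβ : 0 ≤ β) (hγ : 0 ≤ γ)
    (hlow : ∀ t ∈ periodBox T, ∀ w : (Fin n → ℝ) × (Fin n → Fin p → ℝ), -β ≤ H t w)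
    (hhigh : ∀ t ∈ periodBox T, ∀ w : (Fin n → ℝ) × (Fin n → Fin p → ℝ),
      H t w ≤ α / 2 * (euclNorm w) ^ 2 + γ)
    (x : (Fin p → ℝ) → (Fin n → ℝ)) (q : (Fin p → ℝ) → (Fin n → Fin p → ℝ))
    (hx : ContDiff ℝ 1 x) (hq : ContDiff ℝ 1 q)
    (hxper : MultiPeriodic T x) (hqper : MultiPeriodic T q)
    (hsol : IsHamiltonSolution T H x q) :
    1 / (2 * α) *
        (∫ t in periodBox T,
          ((∑ i, (∑ a, fderiv ℝ q t (Pi.single a 1) i a) ^ 2)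
            + ∑ i, ∑ b, (fderiv ℝ x t (Pi.single b 1) i) ^ 2))
      + (∫ t in periodBox T,
          ((∑ i, (∑ a, fderiv ℝ q t (Pi.single a 1) i a) * x t i)
            - ∑ i, ∑ b, (fderiv ℝ x t (Pi.single b 1) i) * q t i b))
      ≤ (β + γ) * ∏ i, T i :=
  hamilton_intermediate_inequality_general p n T hT H hC1 hconv α β γ hα hlow hhigh x q hx hq hsol
end
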